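/- Let m ≥ 1 and let M_{2m} be the (m+1)×(m+1) matrix over ℤ[q] with (i,j)-entry C̃_{2m+2−i−j}(q), for 1 ≤ i,j ≤ m+1. Then det M_{2m} = q^N, where N = Σ_{i=1}^{m} C(2i, 2) = C(2,2) + C(4,2) + ⋯ + C(2m,2). -/
import Mathlib
open Polynomial Finset Set


/-- Functions `ℕ → ℕ` bounded by `B` and supported on `[0, u)` form a finite set. -/
lemma finite_bounded_supported (u B : ℕ) :
    {μ : ℕ → ℕ | (∀ i, μ i ≤ B) ∧ ∀ i, u ≤ i → μ i = 0}.Finite := by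
  classical
  set S := {μ : ℕ → ℕ | (∀ i, μ i ≤ B) ∧ ∀ i, u ≤ i → μ i = 0}
  have h1 : ((fun (μ : ℕ → ℕ) => (fun i : Fin u => μ i)) '' S).Finite := by
    apply Set.Finite.subset (Set.Finite.pi (fun _ : Fin u => Set.finite_Iic B))
    rintro g ⟨μ, hμ, rfl⟩
    intro i _
    exact hμ.1 i
  refine Set.Finite.of_finite_image h1 ?_
  intro μ hμ ν hν h
  funext i
  by_cases hi : i < u
  · exact congrFun h ⟨i, hi⟩
  · rw [hμ.2 i (by omega), hν.2 i (by omega)]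


/-- Weighted lattice-path transfer polynomial: `pw m h` is the weight of paths of
length `m` from height `0` to height `h` with up-steps of weight 1 and
down-steps from height `h+1` of weight `X^h`. -/
noncomputable def pw : ℕ → ℕ → Polynomial ℤ
  | 0, h => if h = 0 then 1 else 0
  | (m+1), 0 => pw m 1
  | (m+1), (h+1) => pw m h + Polynomial.X ^ (h+1) * pw m (h+2)

lemma pw_eq_zero_of_lt : ∀ m h : ℕ, m < h → pw m h = 0 := by
  intro m
  induction m with
  | zero => intro h hh; simp [pw]; omega
  | succ m ih =>
    intro h hh
    match h, hh with
    | (h+1), hh =>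
      show pw m h + Polynomial.X ^ (h+1) * pw m (h+2) = 0
      rw [ih h (by omega), ih (h+2) (by omega)]
      ring

lemma pw_diag : ∀ m : ℕ, pw m m = 1 := by
  intro m
  induction m with
  | zero => simp [pw]
  | succ m ih =>
    show pw m m + Polynomial.X ^ (m+1) * pw m (m+2) = 1
    rw [ih, pw_eq_zero_of_lt m (m+2) (by omega)]
    ring

lemma pw_parity : ∀ m h : ℕ, (m + h) % 2 = 1 → pw m h = 0 := by
  intro m
  induction m with
  | zero => intro h hp; have : h ≠ 0 := by omega
            simp [pw, this]
  | succ m ih =>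
    intro h hp
    match h with
    | 0 => show pw m 1 = 0; exact ih 1 (by omega)
    | (h+1) =>
      show pw m h + Polynomial.X ^ (h+1) * pw m (h+2) = 0
      rw [ih h (by omega), ih (h+2) (by omega)]; ring

lemma pw_succ (m h : ℕ) :
    pw (m+1) h = (if h = 0 then 0 else pw m (h-1)) + Polynomial.X ^ h * pw m (h+1) := by
  match h with
  | 0 => show pw m 1 = _ ; simp
  | (h+1) => show pw m h + Polynomial.X ^ (h+1) * pw m (h+2) = _ ; simp

lemma ch2 (d : ℕ) : (d+1).choose 2 = d.choose 2 + d := by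
  rw [Nat.choose_succ_succ d 1, Nat.choose_one_right]; ring

lemma sumdi (d : ℕ) : ∑ i ∈ Finset.range d, (d - i) = (d+1).choose 2 := by
  induction d with
  | zero => simp
  | succ d ih =>
    rw [Finset.sum_range_succ' (fun i => d + 1 - i) d]
    have : ∀ i ∈ Finset.range d, (d + 1 - (i+1)) = d - i := by intro i _; omega
    rw [Finset.sum_congr rfl this, ih, ch2 (d+1)]
    omega

def SrSet (u d : ℕ) : Set (ℕ → ℕ) :=
  {μ | Antitone μ ∧ (∀ i, μ i ≤ d) ∧ (∀ i, i < u → d - i ≤ μ i) ∧ ∀ i, u ≤ i → μ i = 0}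

noncomputable def Rw (u d : ℕ) : Polynomial ℤ :=
  ∑ᶠ μ ∈ SrSet u d, Polynomial.X ^ ((∑ᶠ i, μ i) - (d+1).choose 2)

lemma SrSet_finite (u d : ℕ) : (SrSet u d).Finite := by
  apply (finite_bounded_supported u d).subset
  rintro μ ⟨_, h2, _, h4⟩
  exact ⟨h2, h4⟩

lemma finsum_eq_range {μ : ℕ → ℕ} {u : ℕ} (h : ∀ i, u ≤ i → μ i = 0) :
    (∑ᶠ i, μ i) = ∑ i ∈ Finset.range u, μ i := by
  apply finsum_eq_sum_of_support_subset
  intro i hi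
  simp only [Function.mem_support] at hi
  simp only [Finset.coe_range, Set.mem_Iio]
  by_contra hc
  exact hi (h i (by omega))

lemma SrSet_sum_lb {μ : ℕ → ℕ} {u d : ℕ} (hd : d ≤ u) (hμ : μ ∈ SrSet u d) :
    (d+1).choose 2 ≤ ∑ i ∈ Finset.range u, μ i := by
  obtain ⟨h1, h2, h3, h4⟩ := hμ
  calc (d+1).choose 2 = ∑ i ∈ Finset.range d, (d - i) := (sumdi d).symm
    _ ≤ ∑ i ∈ Finset.range d, μ i := Finset.sum_le_sum (fun i hi => h3 i (by simp at hi; omega))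
    _ ≤ ∑ i ∈ Finset.range u, μ i :=
        Finset.sum_le_sum_of_subset (Finset.range_subset_range.2 hd)

lemma Rw_zero_right (u : ℕ) : Rw u 0 = 1 := by
  have hset : SrSet u 0 = {fun _ => 0} := by
    ext μ
    constructor
    · rintro ⟨h1, h2, h3, h4⟩
      funext i
      exact Nat.le_zero.1 (h2 i)
    · rintro rfl
      exact ⟨fun _ _ _ => le_rfl, fun _ => le_rfl, fun i _ => by simp, fun _ _ => rfl⟩
  rw [Rw, hset, finsum_mem_singleton]
  simp

lemma SrSet_support {μ : ℕ → ℕ} {u d : ℕ} (hμ : μ ∈ SrSet u d) :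
    (∑ᶠ i, μ i) = ∑ i ∈ Finset.range u, μ i :=
  finsum_eq_range hμ.2.2.2

/-- The "last step is a down-step" part of the recurrence. -/
lemma Rw_down (u d : ℕ) (hd : 1 ≤ d) (hdu : d ≤ u) :
    (∑ᶠ μ ∈ {μ ∈ SrSet u d | 1 ≤ μ (u-1)},
        (Polynomial.X : Polynomial ℤ) ^ ((∑ᶠ i, μ i) - (d+1).choose 2))
      = Polynomial.X ^ (u - d) * Rw u (d-1) := by
  classical
  have hu : 1 ≤ u := le_trans hd hdu
  set S₂ : Set (ℕ → ℕ) := {μ ∈ SrSet u d | 1 ≤ μ (u-1)} with hS₂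
  set e : (ℕ → ℕ) → (ℕ → ℕ) := fun μ i => μ i - 1 with he
  -- positivity of parts on the support
  have hpos : ∀ μ ∈ S₂, ∀ i, i < u → 1 ≤ μ i := by
    rintro μ ⟨hμ, hlast⟩ i hi
    exact le_trans hlast (hμ.1 (by omega : i ≤ u - 1))
  have hmaps : Set.MapsTo e S₂ (SrSet u (d-1)) := by
    rintro μ ⟨⟨h1, h2, h3, h4⟩, hlast⟩
    refine ⟨fun i j hij => Nat.sub_le_sub_right (h1 hij) 1,
      fun i => by show μ i - 1 ≤ d - 1; have := h2 i; omega,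
      fun i hi => by show d - 1 - i ≤ μ i - 1; have := h3 i hi; omega,
      fun i hi => by show μ i - 1 = 0; rw [h4 i hi]⟩
  have hinj : Set.InjOn e S₂ := by
    intro μ hμ ν hν hee
    funext i
    by_cases hi : i < u
    · have h1 := hpos μ hμ i hi
      have h2 := hpos ν hν i hi
      have := congrFun hee i
      simp only [he] at this
      omega
    · rw [hμ.1.2.2.2 i (by omega), hν.1.2.2.2 i (by omega)]
  have hsurj : Set.SurjOn e S₂ (SrSet u (d-1)) := by
    rintro ν ⟨h1, h2, h3, h4⟩
    refine ⟨fun i => if i < u then ν i + 1 else 0, ⟨⟨?_, ?_, ?_, ?_⟩, ?_⟩, ?_⟩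
    · intro i j hij
      by_cases hj : j < u
      · simp only [if_pos hj, if_pos (by omega : i < u)]
        exact Nat.succ_le_succ (h1 hij)
      · simp only [if_neg hj]
        exact Nat.zero_le _
    · intro i
      by_cases hi : i < u
      · simp only [if_pos hi]; have := h2 i; omega
      · simp only [if_neg hi]; omega
    · intro i hi
      simp only [if_pos hi]
      have := h3 i hi; omega
    · intro i hi
      simp only [if_neg (by omega : ¬ i < u)]
    · simp only [if_pos (by omega : u - 1 < u)]; omega
    · funext i
      by_cases hi : i < u
      · simp only [he, if_pos hi]; omega
      · simp only [he, if_neg hi]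
        rw [h4 i (by omega)]
  have hbij : Set.BijOn e S₂ (SrSet u (d-1)) := ⟨hmaps, hinj, hsurj⟩
  have hwt : ∀ μ ∈ S₂,
      (Polynomial.X : Polynomial ℤ) ^ ((∑ᶠ i, μ i) - (d+1).choose 2)
        = Polynomial.X ^ ((u - d) + ((∑ᶠ i, e μ i) - ((d-1)+1).choose 2)) := by
    intro μ hμ
    have hμ' := hmaps hμ
    rw [SrSet_support hμ.1, SrSet_support hμ']
    have hsum : ∑ i ∈ Finset.range u, μ i = (∑ i ∈ Finset.range u, e μ i) + u := by
      have : ∀ i ∈ Finset.range u, μ i = e μ i + 1 := by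
        intro i hi
        have := hpos μ hμ i (Finset.mem_range.1 hi)
        simp only [he]; omega
      rw [Finset.sum_congr rfl this, Finset.sum_add_distrib]
      simp
    have hlb : ((d-1)+1).choose 2 ≤ ∑ i ∈ Finset.range u, e μ i :=
      SrSet_sum_lb (by omega) hμ'
    congr 1
    have hd1 : (d-1)+1 = d := by omega
    rw [hd1] at hlb ⊢
    rw [ch2 d] at *
    omega
  rw [finsum_mem_eq_of_bijOn (g := fun ν => (Polynomial.X : Polynomial ℤ) ^ ((u - d) + ((∑ᶠ i, ν i) - ((d-1)+1).choose 2))) e hbij hwt]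
  rw [Rw]
  rw [finsum_mem_eq_finite_toFinset_sum _ (SrSet_finite u (d-1)),
      finsum_mem_eq_finite_toFinset_sum _ (SrSet_finite u (d-1)), Finset.mul_sum]
  apply Finset.sum_congr rfl
  intro ν _
  rw [pow_add]

lemma Rw_diag_step (d : ℕ) (hd : 1 ≤ d) : Rw d d = Rw d (d-1) := by
  classical
  have hset : SrSet d d = {μ ∈ SrSet d d | 1 ≤ μ (d-1)} := by
    ext μ
    simp only [Set.mem_setOf_eq, Set.mem_sep_iff]
    refine ⟨fun h => ⟨h, ?_⟩, fun h => h.1⟩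
    have := h.2.2.1 (d-1) (by omega)
    omega
  have := Rw_down d d hd le_rfl
  rw [← hset] at this
  rw [Rw] at *
  rw [this]
  rw [Rw]
  simp

lemma Rw_rec (u d : ℕ) (hd : 1 ≤ d) (hdu : d < u) :
    Rw u d = Rw (u-1) d + Polynomial.X ^ (u - d) * Rw u (d-1) := by
  classical
  have hu : 1 ≤ u := by omega
  have hsplit : SrSet u d =
      SrSet (u-1) d ∪ {μ ∈ SrSet u d | 1 ≤ μ (u-1)} := by
    ext μ
    simp only [Set.mem_union, Set.mem_sep_iff]
    constructor
    · rintro h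
      by_cases hlast : 1 ≤ μ (u-1)
      · exact Or.inr ⟨h, hlast⟩
      · left
        obtain ⟨h1, h2, h3, h4⟩ := h
        have hz : μ (u-1) = 0 := by omega
        refine ⟨h1, h2, fun i hi => h3 i (by omega), fun i hi => ?_⟩
        have := h1 (show u - 1 ≤ i by omega)
        omega
    · rintro (⟨h1, h2, h3, h4⟩ | ⟨h, _⟩)
      · refine ⟨h1, h2, fun i hi => ?_, fun i hi => h4 i (by omega)⟩
        by_cases hi' : i < u - 1
        · exact h3 i hi'
        · have : μ i = 0 := h4 i (by omega)
          omega
      · exact h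
  have hdisj : Disjoint (SrSet (u-1) d) {μ ∈ SrSet u d | 1 ≤ μ (u-1)} := by
    rw [Set.disjoint_left]
    rintro μ h1 ⟨_, hlast⟩
    have := h1.2.2.2 (u-1) le_rfl
    omega
  rw [Rw, hsplit, finsum_mem_union hdisj ((SrSet_finite (u-1) d).subset (by
      intro μ h; exact h)) (((SrSet_finite u d)).subset (fun μ h => h.1))]
  rw [Rw_down u d hd (by omega)]
  rfl

lemma pw_eq_Rw : ∀ N u d : ℕ, u + d = N → d ≤ u → pw N (u - d) = Rw u d := by
  intro N
  induction N with
  | zero =>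
    intro u d h1 h2
    have hu : u = 0 := by omega
    have hd : d = 0 := by omega
    subst hu; subst hd
    simpa [pw] using (Rw_zero_right 0).symm
  | succ N ih =>
    intro u d h1 h2
    rcases Nat.eq_zero_or_pos d with hd | hd
    · subst hd
      have hu : u = N + 1 := by omega
      subst hu
      rw [Nat.sub_zero, pw_diag, Rw_zero_right]
    · by_cases hud : u = d
      · subst hud
        have e0 : u - u = 0 := by omega
        rw [e0]
        have h0 : pw (N+1) 0 = pw N 1 := rfl
        have h1' := ih u (u-1) (by omega) (by omega)
        have e1 : u - (u - 1) = 1 := by omega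
        rw [e1] at h1'
        rw [h0, h1', Rw_diag_step u hd]
      · have hlt : d < u := by omega
        have hrw : u - d = (u - d - 1) + 1 := by omega
        rw [hrw]
        have hstep : pw (N+1) ((u-d-1)+1)
            = pw N (u-d-1) + Polynomial.X ^ ((u-d-1)+1) * pw N ((u-d-1)+2) := rfl
        rw [hstep]
        have ih1 := ih (u-1) d (by omega) (by omega)
        have e1 : (u-1) - d = u - d - 1 := by omega
        rw [e1] at ih1
        have ih2 := ih u (d-1) (by omega) (by omega)
        have e2 : u - (d-1) = (u-d-1) + 2 := by omega
        rw [e2] at ih2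
        rw [ih1, ih2, Rw_rec u d hd hlt, ← hrw]

lemma sum_range_pred (n : ℕ) : ∑ k ∈ Finset.range n, (n - (k+1)) = n.choose 2 := by
  cases n with
  | zero => simp
  | succ m =>
    rw [Finset.sum_range_succ]
    have : ∀ k ∈ Finset.range m, (m + 1 - (k+1)) = m - k := by intro k _; omega
    rw [Finset.sum_congr rfl this]
    simpa using sumdi m

lemma sq_split (n : ℕ) : n.choose 2 + (n+1).choose 2 = n * n := by
  induction n with
  | zero => simp
  | succ n ih =>
    have h1 := ch2 n
    have h2 := ch2 (n+1)
    have h3 : (n+1)*(n+1) = n*n + 2*n + 1 := by ring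
    omega

/-- The q-Catalan polynomial `C̃_n(q) = Σ_{μ ⊆ δ_{n-1}} q^{C(n,2) - |μ|}` of
Fürlinger and Hofbauer, where `μ` runs over partitions with `μ_k ≤ n - k`. -/
noncomputable def qCatalan (n : ℕ) : Polynomial ℤ :=
  ∑ᶠ μ ∈ {μ : ℕ → ℕ | Antitone μ ∧ ∀ k, μ k ≤ n - (k + 1)},
    Polynomial.X ^ (Nat.choose n 2 - ∑ᶠ k, μ k)

lemma qCatalan_eq_Rw (n : ℕ) : qCatalan n = Rw n n := by
  classical
  rw [qCatalan, Rw]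
  set e : (ℕ → ℕ) → (ℕ → ℕ) := fun lam i => if i < n then n - lam (n - 1 - i) else 0 with he
  set Sq : Set (ℕ → ℕ) := {μ : ℕ → ℕ | Antitone μ ∧ ∀ k, μ k ≤ n - (k + 1)} with hSq
  have hvanish : ∀ lam ∈ Sq, ∀ k, n ≤ k + 1 → lam k = 0 := by
    rintro lam ⟨h1, h2⟩ k hk
    have := h2 k
    omega
  have hmaps : Set.MapsTo e Sq (SrSet n n) := by
    rintro lam ⟨h1, h2⟩
    refine ⟨?_, ?_, ?_, ?_⟩
    · intro i j hij
      by_cases hj : j < n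
      · have hi : i < n := by omega
        simp only [he, if_pos hj, if_pos hi]
        have : lam (n - 1 - i) ≤ lam (n - 1 - j) := h1 (by omega)
        omega
      · simp only [he, if_neg hj]
        exact Nat.zero_le _
    · intro i
      by_cases hi : i < n
      · simp only [he, if_pos hi]; omega
      · simp only [he, if_neg hi]; omega
    · intro i hi
      simp only [he, if_pos hi]
      have := h2 (n - 1 - i)
      omega
    · intro i hi
      simp only [he, if_neg (by omega : ¬ i < n)]
  have hinj : Set.InjOn e Sq := by
    intro lam hlam nu hnu hee
    funext k
    by_cases hk : k < n
    · have : n - 1 - (n - 1 - k) = k := by omega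
      have hc := congrFun hee (n - 1 - k)
      simp only [he, if_pos (by omega : n - 1 - k < n), this] at hc
      have b1 := hlam.2 k
      have b2 := hnu.2 k
      omega
    · rw [hvanish lam hlam k (by omega), hvanish nu hnu k (by omega)]
  have hsurj : Set.SurjOn e Sq (SrSet n n) := by
    rintro μ ⟨h1, h2, h3, h4⟩
    refine ⟨fun k => if k < n then n - μ (n - 1 - k) else 0, ⟨?_, ?_⟩, ?_⟩
    · intro k l hkl
      by_cases hl : l < n
      · have hk : k < n := by omega
        simp only [if_pos hl, if_pos hk]
        have : μ (n - 1 - l) ≥ μ (n - 1 - k) := h1 (by omega)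
        omega
      · simp only [if_neg hl]
        exact Nat.zero_le _
    · intro k
      by_cases hk : k < n
      · simp only [if_pos hk]
        have := h3 (n - 1 - k) (by omega)
        omega
      · simp only [if_neg hk]; omega
    · funext i
      by_cases hi : i < n
      · simp only [he, if_pos hi, if_pos (by omega : n - 1 - i < n)]
        have hii : n - 1 - (n - 1 - i) = i := by omega
        rw [hii]
        have := h2 i
        omega
      · simp only [he, if_neg hi]
        rw [h4 i (by omega)]
  have hwt : ∀ lam ∈ Sq,
      (Polynomial.X : Polynomial ℤ) ^ (Nat.choose n 2 - ∑ᶠ k, lam k)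
        = Polynomial.X ^ ((∑ᶠ i, e lam i) - (n+1).choose 2) := by
    intro lam hlam
    have hs1 : (∑ᶠ k, lam k) = ∑ k ∈ Finset.range n, lam k :=
      finsum_eq_range (fun k hk => hvanish lam hlam k (by omega))
    have hs2 : (∑ᶠ i, e lam i) = ∑ i ∈ Finset.range n, e lam i :=
      finsum_eq_range (fun i hi => by simp only [he, if_neg (by omega : ¬ i < n)])
    have hsum2 : (∑ i ∈ Finset.range n, e lam i) + ∑ k ∈ Finset.range n, lam k = n * n := by
      have hre : ∑ i ∈ Finset.range n, lam (n - 1 - i) = ∑ k ∈ Finset.range n, lam k :=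
        Finset.sum_range_reflect lam n
      rw [← hre, ← Finset.sum_add_distrib]
      have : ∀ i ∈ Finset.range n, e lam i + lam (n - 1 - i) = n := by
        intro i hi
        have hi' : i < n := Finset.mem_range.1 hi
        simp only [he, if_pos hi']
        have := hlam.2 (n - 1 - i)
        omega
      rw [Finset.sum_congr rfl this]
      simp [Finset.sum_const, mul_comm]
    have hub : ∑ k ∈ Finset.range n, lam k ≤ n.choose 2 := by
      calc ∑ k ∈ Finset.range n, lam k ≤ ∑ k ∈ Finset.range n, (n - (k+1)) :=
            Finset.sum_le_sum (fun k _ => hlam.2 k)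
        _ = n.choose 2 := sum_range_pred n
    have hsq := sq_split n
    rw [hs1, hs2]
    congr 1
    omega
  exact finsum_mem_eq_of_bijOn e ⟨hmaps, hinj, hsurj⟩ hwt

lemma qCatalan_eq_pw (n : ℕ) : qCatalan n = pw (2*n) 0 := by
  rw [qCatalan_eq_Rw]
  have := pw_eq_Rw (n+n) n n rfl le_rfl
  have e1 : n - n = 0 := by omega
  have e2 : 2*n = n+n := by omega
  rw [e1] at this
  rw [e2, this]

lemma swap_lemma (n k B : ℕ) (hn : n + 1 ≤ B) (hk : k + 1 ≤ B) :
    ∑ h ∈ Finset.range (B+1), pw (n+1) h * pw k h * Polynomial.X ^ (h.choose 2)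
      = ∑ h ∈ Finset.range (B+1), pw n h * pw (k+1) h * Polynomial.X ^ (h.choose 2) := by
  have L : ∀ h, pw (n+1) h * pw k h * (Polynomial.X : Polynomial ℤ) ^ (h.choose 2)
      = (if h = 0 then 0 else pw n (h-1)) * pw k h * Polynomial.X ^ (h.choose 2)
        + pw n (h+1) * pw k h * Polynomial.X ^ (h.choose 2 + h) := by
    intro h; rw [pw_succ, pow_add]; ring
  have Rr : ∀ h, pw n h * pw (k+1) h * (Polynomial.X : Polynomial ℤ) ^ (h.choose 2)
      = pw n h * (if h = 0 then 0 else pw k (h-1)) * Polynomial.X ^ (h.choose 2)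
        + pw n h * pw k (h+1) * Polynomial.X ^ (h.choose 2 + h) := by
    intro h; rw [pw_succ, pow_add]; ring
  rw [Finset.sum_congr rfl (fun h _ => L h), Finset.sum_congr rfl (fun h _ => Rr h),
      Finset.sum_add_distrib, Finset.sum_add_distrib, add_comm]
  congr 1
  · -- Σ pw n (h+1) * pw k h * X^(C+h) = Σ pw n h * (if ...) * X^C
    rw [Finset.sum_range_succ, Finset.sum_range_succ'
      (fun h => pw n h * (if h = 0 then 0 else pw k (h-1)) * Polynomial.X ^ (h.choose 2)) B]
    rw [pw_eq_zero_of_lt n (B+1) (by omega)]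
    simp only [Nat.succ_ne_zero, ite_false, ite_true, Nat.add_sub_cancel, mul_zero, zero_mul,
      add_zero, zero_add, if_true, if_false]
    exact Finset.sum_congr rfl (fun x _ => by rw [ch2 x])
  · -- Σ (if...) * pw k h * X^C = Σ pw n h * pw k (h+1) * X^(C+h)
    rw [Finset.sum_range_succ'
      (fun h => (if h = 0 then 0 else pw n (h-1)) * pw k h * Polynomial.X ^ (h.choose 2)) B,
      Finset.sum_range_succ]
    rw [pw_eq_zero_of_lt k (B+1) (by omega)]
    simp only [Nat.succ_ne_zero, ite_false, ite_true, Nat.add_sub_cancel, mul_zero, zero_mul,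
      add_zero, zero_add, if_true, if_false]
    exact Finset.sum_congr rfl (fun x _ => by rw [ch2 x])

lemma conv_lemma : ∀ k n B : ℕ, n + k ≤ B →
    pw (n + k) 0 = ∑ h ∈ Finset.range (B+1), pw n h * pw k h * Polynomial.X ^ (h.choose 2) := by
  intro k
  induction k with
  | zero =>
    intro n B hB
    have : ∀ h ∈ Finset.range (B+1), pw n h * pw 0 h * (Polynomial.X:Polynomial ℤ) ^ (h.choose 2)
        = if h = 0 then pw n 0 else 0 := by
      intro h _
      show pw n h * (if h = 0 then 1 else 0) * _ = _
      by_cases hh : h = 0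
      · subst hh; simp
      · simp [hh]
    rw [Finset.sum_congr rfl this, Finset.sum_ite_eq' (Finset.range (B+1)) 0 (fun _ => pw n 0)]
    simp
  | succ k ih =>
    intro n B hB
    have e1 : n + (k + 1) = (n + 1) + k := by omega
    rw [e1, ih (n+1) B (by omega), swap_lemma n k B (by omega) (by omega)]

lemma sum_even_reindex (f : ℕ → Polynomial ℤ) (N : ℕ) (hodd : ∀ h, h % 2 = 1 → f h = 0) :
    ∑ h ∈ Finset.range (2*N+1), f h = ∑ j ∈ Finset.range (N+1), f (2*j) := by
  induction N with
  | zero => simp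
  | succ N ih =>
    have e1 : 2*(N+1)+1 = (2*N+1) + 1 + 1 := by omega
    rw [e1, Finset.sum_range_succ, Finset.sum_range_succ, ih,
        Finset.sum_range_succ (fun j => f (2*j)) (N+1)]
    rw [hodd (2*N+1) (by omega)]
    have e2 : 2*N+1+1 = 2*(N+1) := by omega
    rw [e2]
    ring

/-- **Corollary (determinant of the even q-Catalan matrix).**
For `m ≥ 1`, `det M_{2m} = q^N` with `N = Σ_{i=1}^{m} C(2i, 2)`. -/
theorem det_qCatalan_even (m : ℕ) (hm : 1 ≤ m) :
    (Matrix.of (fun i j : Fin (m + 1) =>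
        qCatalan (2 * m + 2 - ((i : ℕ) + 1) - ((j : ℕ) + 1)))).det
      = Polynomial.X ^ (∑ i ∈ Finset.range m, Nat.choose (2 * i + 2) 2) := by
  classical
  set A : Matrix (Fin (m+1)) (Fin (m+1)) (Polynomial ℤ) :=
    Matrix.of (fun n j : Fin (m+1) => pw (2*(m - (n:ℕ))) (2*(j:ℕ))) with hA
  set D : Matrix (Fin (m+1)) (Fin (m+1)) (Polynomial ℤ) :=
    Matrix.diagonal (fun j : Fin (m+1) => Polynomial.X ^ ((2*(j:ℕ)).choose 2)) with hD
  have hM : (Matrix.of (fun i j : Fin (m + 1) =>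
      qCatalan (2 * m + 2 - ((i : ℕ) + 1) - ((j : ℕ) + 1)))) = A * D * A.transpose := by
    refine Matrix.ext (fun n k => ?_)
    have hn := n.is_le
    have hk := k.is_le
    -- RHS entry
    have hrhs : (A * D * A.transpose) n k
        = ∑ j : Fin (m+1), pw (2*(m - (n:ℕ))) (2*(j:ℕ)) * Polynomial.X ^ ((2*(j:ℕ)).choose 2)
            * pw (2*(m - (k:ℕ))) (2*(j:ℕ)) := by
      rw [Matrix.mul_apply]
      apply Finset.sum_congr rfl
      intro j _
      rw [Matrix.mul_diagonal, Matrix.transpose_apply]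
      rfl
    -- LHS entry
    have e0 : 2 * m + 2 - ((n : ℕ) + 1) - ((k : ℕ) + 1) = (2*m - (n:ℕ) - (k:ℕ)) := by omega
    have e1 : 2*(2*m - (n:ℕ) - (k:ℕ)) = 2*(m - (n:ℕ)) + 2*(m - (k:ℕ)) := by omega
    have hlhs : qCatalan (2 * m + 2 - ((n : ℕ) + 1) - ((k : ℕ) + 1))
        = ∑ h ∈ Finset.range (4*m+1),
            pw (2*(m - (n:ℕ))) h * pw (2*(m - (k:ℕ))) h * Polynomial.X ^ (h.choose 2) := by
      rw [e0, qCatalan_eq_pw, e1, conv_lemma (2*(m - (k:ℕ))) (2*(m - (n:ℕ))) (4*m) (by omega)]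
    have e4 : 4*m+1 = 2*(2*m)+1 := by omega
    rw [Matrix.of_apply, hlhs, e4,
        sum_even_reindex _ (2*m) (fun h hh => by
          rw [pw_parity (2*(m - (n:ℕ))) h (by omega)]; ring)]
    rw [hrhs, Fin.sum_univ_eq_sum_range
      (fun j => pw (2*(m - (n:ℕ))) (2*j) * Polynomial.X ^ ((2*j).choose 2)
        * pw (2*(m - (k:ℕ))) (2*j)) (m+1)]
    rw [← Finset.sum_subset (Finset.range_subset_range.2 (by omega : m+1 ≤ 2*m+1))
      (fun x hx hnx => by
        rw [pw_eq_zero_of_lt (2*(m - (n:ℕ))) (2*x) (by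
          simp only [Finset.mem_range] at hx hnx; omega)]
        ring)]
    apply Finset.sum_congr rfl
    intro j _
    ring
  -- the triangular companion
  set U : Matrix (Fin (m+1)) (Fin (m+1)) (Polynomial ℤ) :=
    Matrix.of (fun n j : Fin (m+1) => pw (2*(m - (n:ℕ))) (2*(m - (j:ℕ)))) with hU
  have hAU : A = U.submatrix id ⇑(Fin.revPerm : Equiv.Perm (Fin (m+1))) := by
    ext n j
    simp only [Matrix.submatrix_apply, id_eq, hU, hA, Matrix.of_apply, Fin.revPerm_apply]
    congr 2
    have := j.is_le
    rw [Fin.val_rev]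
    omega
  have hUdet : U.det = 1 := by
    rw [Matrix.det_of_upperTriangular (by
      intro i j hij
      simp only [id_eq] at hij
      simp only [hU, Matrix.of_apply]
      apply pw_eq_zero_of_lt
      have hi := i.is_le
      have hj := j.is_le
      have : (j:ℕ) < (i:ℕ) := hij
      omega)]
    apply Finset.prod_eq_one
    intro i _
    simp only [hU, Matrix.of_apply]
    exact pw_diag _
  have hAdet : A.det = ((Equiv.Perm.sign (Fin.revPerm : Equiv.Perm (Fin (m+1))) : ℤ) : Polynomial ℤ) := by
    rw [hAU, Matrix.det_permute' _ U, hUdet, mul_one]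
  rw [hM, Matrix.det_mul, Matrix.det_mul, Matrix.det_transpose, hAdet]
  have hsign : (((Equiv.Perm.sign (Fin.revPerm : Equiv.Perm (Fin (m+1))) : ℤ) : Polynomial ℤ))
      * (((Equiv.Perm.sign (Fin.revPerm : Equiv.Perm (Fin (m+1))) : ℤ) : Polynomial ℤ)) = 1 := by
    rw [← Int.cast_mul, ← Units.val_mul, Int.units_mul_self]
    simp
  have hDdet : D.det = Polynomial.X ^ (∑ i ∈ Finset.range m, Nat.choose (2 * i + 2) 2) := by
    rw [hD, Matrix.det_diagonal, Finset.prod_pow_eq_pow_sum]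
    congr 1
    rw [Fin.sum_univ_eq_sum_range (fun j => (2*j).choose 2) (m+1),
        Finset.sum_range_succ' (fun j => (2*j).choose 2) m]
    have hterm : ∀ i ∈ Finset.range m, ((2*(i+1)).choose 2 : ℕ) = (2*i+2).choose 2 := by
      intro i _
      rw [show 2*(i+1) = 2*i+2 by omega]
    rw [Finset.sum_congr rfl hterm]
    norm_num
  calc ((Equiv.Perm.sign (Fin.revPerm : Equiv.Perm (Fin (m+1))) : ℤ) : Polynomial ℤ) * D.det
        * ((Equiv.Perm.sign (Fin.revPerm : Equiv.Perm (Fin (m+1))) : ℤ) : Polynomial ℤ)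
      = (((Equiv.Perm.sign (Fin.revPerm : Equiv.Perm (Fin (m+1))) : ℤ) : Polynomial ℤ)
          * ((Equiv.Perm.sign (Fin.revPerm : Equiv.Perm (Fin (m+1))) : ℤ) : Polynomial ℤ)) * D.det := by
        ring
    _ = D.det := by rw [hsign, one_mul]
    _ = _ := hDdet
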